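/- arXiv:1101.2170 — 6 statements merged into one kernel-verified Lean document; each statement's English description precedes it below -/
import Mathlib

section
/- Let n, l : ℕ and let clauses : Fin l → ((Fin n × Bool) × (Fin n × Bool) × (Fin n × Bool)), writing clause k as (a_k, b_k, c_k). Say σ : Fin n → Bool satisfies the 3SAT instance iff for every k, eval σ a_k || eval σ b_k || eval σ c_k = true. Say τ : (Fin n ⊕ Fin l) → Bool satisfies the transformed cNAE instance iff for every k (writing σ' = τ ∘ Sum.inl and x_k = τ (Sum.inr k)): NAE(eval σ' a_k, eval σ' b_k, x_k), NAE(!x_k, eval σ' c_k, false), NAE(eval σ' a_k, x_k, true), and NAE(eval σ' b_k, x_k, true). Define E σ = Sum.elim σ (fun k => !(eval σ a_k || eval σ b_k)). Then: (i) if σ satisfies the 3SAT instance, then E σ satisfies the transformed instance; and (ii) if τ satisfies the transformed instance, then τ ∘ Sum.inl satisfies the 3SAT instance and τ = E (τ ∘ Sum.inl). Consequently E is a bijection between the satisfying assignments of the two instances. -/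
/-- `NAE p q r` holds iff the three Booleans are not all equal. -/
def NAE (p q r : Bool) : Prop := ¬ (p = q ∧ q = r)

/-- The value of the literal `(i, pol)` under the assignment `σ`. -/
def evalLit {n : ℕ} (σ : Fin n → Bool) (lit : Fin n × Bool) : Bool :=
  if lit.2 then σ lit.1 else !(σ lit.1)

lemma nae_fwd (a b c : Bool) (h : (a || b || c) = true) :
    NAE a b (!(a || b)) ∧ NAE (!(!(a || b))) c false ∧
    NAE a (!(a || b)) true ∧ NAE b (!(a || b)) true := by
  unfold NAE; revert h; cases a <;> cases b <;> cases c <;> decide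

lemma nae_bwd (a b c x : Bool)
    (h : NAE a b x ∧ NAE (!x) c false ∧ NAE a x true ∧ NAE b x true) :
    (a || b || c) = true ∧ x = !(a || b) := by
  unfold NAE at h; revert h; cases a <;> cases b <;> cases c <;> cases x <;> decide

/-- The solution-preserving bijection underlying the ASP-reduction from 3SAT to
Not-All-Equal-3SAT with constants (Theorem 2.2 of the paper). -/
theorem asp_reduction_3SAT_to_cNAE3SAT (n l : ℕ)
    (clauses : Fin l → ((Fin n × Bool) × (Fin n × Bool) × (Fin n × Bool)))
    (Sat3 : (Fin n → Bool) → Prop)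
    (hSat3 : ∀ σ, Sat3 σ ↔ ∀ k : Fin l,
      (evalLit σ (clauses k).1 || evalLit σ (clauses k).2.1
        || evalLit σ (clauses k).2.2) = true)
    (SatNAE : ((Fin n ⊕ Fin l) → Bool) → Prop)
    (hSatNAE : ∀ τ, SatNAE τ ↔ ∀ k : Fin l,
      NAE (evalLit (τ ∘ Sum.inl) (clauses k).1) (evalLit (τ ∘ Sum.inl) (clauses k).2.1)
        (τ (Sum.inr k)) ∧
      NAE (!(τ (Sum.inr k))) (evalLit (τ ∘ Sum.inl) (clauses k).2.2) false ∧
      NAE (evalLit (τ ∘ Sum.inl) (clauses k).1) (τ (Sum.inr k)) true ∧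
      NAE (evalLit (τ ∘ Sum.inl) (clauses k).2.1) (τ (Sum.inr k)) true)
    (E : (Fin n → Bool) → ((Fin n ⊕ Fin l) → Bool))
    (hE : ∀ σ, E σ = Sum.elim σ
      (fun k => !(evalLit σ (clauses k).1 || evalLit σ (clauses k).2.1))) :
    (∀ σ, Sat3 σ → SatNAE (E σ)) ∧
    (∀ τ, SatNAE τ → Sat3 (τ ∘ Sum.inl) ∧ τ = E (τ ∘ Sum.inl)) ∧
    Set.BijOn E {σ | Sat3 σ} {τ | SatNAE τ} := by
  have hEl : ∀ σ, E σ ∘ Sum.inl = σ := by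
    intro σ; rw [hE]; rfl
  have fwd : ∀ σ, Sat3 σ → SatNAE (E σ) := by
    intro σ hσ
    rw [hSatNAE]
    intro k
    rw [hEl, hE σ]
    exact nae_fwd _ _ _ ((hSat3 σ).1 hσ k)
  have bwd : ∀ τ, SatNAE τ → Sat3 (τ ∘ Sum.inl) ∧ τ = E (τ ∘ Sum.inl) := by
    intro τ hτ
    rw [hSatNAE] at hτ
    constructor
    · rw [hSat3]; intro k; exact (nae_bwd _ _ _ _ (hτ k)).1
    · funext x
      rw [hE]
      cases x with
      | inl i => rfl
      | inr k => exact (nae_bwd _ _ _ _ (hτ k)).2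
  refine ⟨fwd, bwd, ?_, ?_, ?_⟩
  · intro σ hσ; exact fwd σ hσ
  · intro σ₁ h₁ σ₂ h₂ he
    have := congrArg (· ∘ Sum.inl) he
    simpa [hEl] using this
  · intro τ hτ
    obtain ⟨h1, h2⟩ := bwd τ hτ
    exact ⟨τ ∘ Sum.inl, h1, h2.symm⟩
end

section
/- Let n, l : ℕ and clauses : Fin l → ((Fin n × Bool) × (Fin n × Bool) × (Fin n × Bool)), writing clause k as (a_k, b_k, c_k). Let p : Fin n × Bool → ℝ and z : Fin l → ℝ be such that: (Eq. 1) for every i ∈ Fin n, 0 lies strictly between p (i, false) and p (i, true); and (Eq. 4) for every k ∈ Fin l, z k lies strictly between p a_k and p b_k, and 0 lies strictly between p c_k and z k. Define σ : Fin n → Bool by σ i = decide (0 < p (i, true)). Then for every k ∈ Fin l, NAE(eval σ a_k, eval σ b_k, eval σ c_k) holds. That is, every placement of the symbols on the real line satisfying the betweenness triples of Equations 1 and 4 (with X at 0) induces a satisfying Not-All-Equal assignment. -/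
/-- `z` lies strictly between `u` and `w`. -/
def StrictlyBetween (u z w : ℝ) : Prop := (u < z ∧ z < w) ∨ (w < z ∧ z < u)

/-- Soundness of the reduction from NAE-3SAT to Betweenness: any placement of
the symbols on the real line satisfying the betweenness triples of Equations 1
and 4 (with `X` at 0) induces a satisfying Not-All-Equal assignment. -/
theorem betweenness_placement_induces_NAE (n l : ℕ)
    (clauses : Fin l → ((Fin n × Bool) × (Fin n × Bool) × (Fin n × Bool)))
    (p : Fin n × Bool → ℝ) (z : Fin l → ℝ)
    (heq1 : ∀ i : Fin n, StrictlyBetween (p (i, false)) 0 (p (i, true)))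
    (heq4 : ∀ k : Fin l,
      StrictlyBetween (p (clauses k).1) (z k) (p (clauses k).2.1) ∧
      StrictlyBetween (p (clauses k).2.2) 0 (z k)) :
    ∀ k : Fin l,
      NAE (evalLit (fun i => decide (0 < p (i, true))) (clauses k).1)
          (evalLit (fun i => decide (0 < p (i, true))) (clauses k).2.1)
          (evalLit (fun i => decide (0 < p (i, true))) (clauses k).2.2) := by
  intro k
  set σ : Fin n → Bool := fun i => decide (0 < p (i, true)) with hσ
  have key : ∀ lit : Fin n × Bool, (evalLit σ lit = true ↔ 0 < p lit) := by
    rintro ⟨i, pol⟩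
    rcases heq1 i with ⟨h1, h2⟩ | ⟨h1, h2⟩
    · cases pol <;> simp [evalLit, hσ, h1, h2, not_lt.mpr (le_of_lt h1), not_lt.mpr (le_of_lt h2)]
    · cases pol <;> simp [evalLit, hσ, h1, h2, not_lt.mpr (le_of_lt h1), not_lt.mpr (le_of_lt h2)]
  have keyf : ∀ lit : Fin n × Bool, (evalLit σ lit = false ↔ p lit < 0) := by
    rintro ⟨i, pol⟩
    rcases heq1 i with ⟨h1, h2⟩ | ⟨h1, h2⟩
    · cases pol <;> simp [evalLit, hσ, h1, h2, not_lt.mpr (le_of_lt h1), not_lt.mpr (le_of_lt h2)]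
    · cases pol <;> simp [evalLit, hσ, h1, h2, not_lt.mpr (le_of_lt h1), not_lt.mpr (le_of_lt h2)]
  rintro ⟨hab, hbc⟩
  obtain ⟨hz, h0⟩ := heq4 k
  cases hea : evalLit σ (clauses k).1
  · have ha := (keyf _).1 hea
    have hb := (keyf _).1 (hab ▸ hea)
    have hc := (keyf _).1 (hbc ▸ hab ▸ hea)
    have hzneg : z k < 0 := by rcases hz with ⟨u, v⟩ | ⟨u, v⟩ <;> linarith
    rcases h0 with ⟨u, v⟩ | ⟨u, v⟩ <;> linarith
  · have ha := (key _).1 hea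
    have hb := (key _).1 (hab ▸ hea)
    have hc := (key _).1 (hbc ▸ hab ▸ hea)
    have hzpos : 0 < z k := by rcases hz with ⟨u, v⟩ | ⟨u, v⟩ <;> linarith
    rcases h0 with ⟨u, v⟩ | ⟨u, v⟩ <;> linarith
end

section
/- Let n, l : ℕ and clauses : Fin l → ((Fin n × Bool) × (Fin n × Bool) × (Fin n × Bool)), writing clause k as (a_k, b_k, c_k), and assume that for each k the three literals a_k, b_k, c_k have pairwise distinct first components (variables). Let σ : Fin n → Bool be an assignment such that NAE(eval σ a_k, eval σ b_k, eval σ c_k) holds for every k. Then there exist p : Fin n × Bool → ℝ and z : Fin l → ℝ such that: Sum.elim p z : (Fin n × Bool) ⊕ Fin l → ℝ is injective; p (i, pol) ≠ 0 for all (i, pol) and z k ≠ 0 for all k; for all (i, pol), 0 < p (i, pol) if and only if eval σ (i, pol) = true; and for every k, z k lies strictly between p a_k and p b_k and 0 lies strictly between p c_k and z k. -/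
namespace NAEPlacement

/-- Magnitude of the point for a literal: `i+1`. -/
def mag {n : ℕ} (lit : Fin n × Bool) : ℕ := lit.1.val + 1

/-- Placement of literal points. -/
noncomputable def pFun {n : ℕ} (σ : Fin n → Bool) (lit : Fin n × Bool) : ℝ :=
  if evalLit σ lit then (mag lit : ℝ) else -(mag lit : ℝ)

/-- Integer part of the clause point's magnitude. -/
def MnFun {n l : ℕ} (clauses : Fin l → ((Fin n × Bool) × (Fin n × Bool) × (Fin n × Bool)))
    (σ : Fin n → Bool) (k : Fin l) : ℕ :=
  if evalLit σ (clauses k).1 = evalLit σ (clauses k).2.1 then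
    min (mag (clauses k).1) (mag (clauses k).2.1) else 0

/-- Fractional part of the clause point's magnitude. -/
noncomputable def eFun {l : ℕ} (k : Fin l) : ℝ := 1 / ((k : ℝ) + 3)

/-- Placement of clause points. -/
noncomputable def zFun {n l : ℕ}
    (clauses : Fin l → ((Fin n × Bool) × (Fin n × Bool) × (Fin n × Bool)))
    (σ : Fin n → Bool) (k : Fin l) : ℝ :=
  if evalLit σ (clauses k).2.2 then -((MnFun clauses σ k : ℝ) + eFun k)
  else ((MnFun clauses σ k : ℝ) + eFun k)

lemma sb_neg {u z w : ℝ} (h : StrictlyBetween u z w) :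
    StrictlyBetween (-u) (-z) (-w) := by
  rcases h with ⟨h1, h2⟩ | ⟨h1, h2⟩
  · exact Or.inr ⟨by linarith, by linarith⟩
  · exact Or.inl ⟨by linarith, by linarith⟩

lemma sb_min {u w t : ℝ} (h1 : min u w + 1 ≤ max u w)
    (he : 0 < t) (he1 : t < 1) : StrictlyBetween u (min u w + t) w := by
  rcases le_or_gt u w with h | h
  · rw [min_eq_left h] at *
    rw [max_eq_right h] at h1
    exact Or.inl ⟨by linarith, by linarith⟩
  · rw [min_eq_right h.le] at *
    rw [max_eq_left h.le] at h1
    exact Or.inr ⟨by linarith, by linarith⟩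

lemma nat_ne_nat_add {N M : ℕ} {t : ℝ} (h0 : 0 < t) (h1 : t < 1) :
    (N : ℝ) ≠ (M : ℝ) + t := by
  rcases le_or_gt N M with h | h
  · have : (N : ℝ) ≤ M := by exact_mod_cast h
    linarith
  · have : (M : ℝ) + 1 ≤ N := by exact_mod_cast h
    linarith

lemma nat_add_eq {N M : ℕ} {t s : ℝ} (ht : 0 < t) (ht1 : t < 1) (hs : 0 < s)
    (hs1 : s < 1) (h : (N : ℝ) + t = (M : ℝ) + s) : t = s := by
  have hNM : N = M := by
    rcases lt_trichotomy N M with hlt | heq | hgt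
    · exfalso
      have : (N : ℝ) + 1 ≤ M := by exact_mod_cast hlt
      linarith
    · exact heq
    · exfalso
      have : (M : ℝ) + 1 ≤ N := by exact_mod_cast hgt
      linarith
  subst hNM
  linarith

lemma e_pos {l : ℕ} (k : Fin l) : 0 < eFun k := by
  have : (0 : ℝ) < (k : ℝ) + 3 := by positivity
  exact one_div_pos.mpr this

lemma e_lt_one {l : ℕ} (k : Fin l) : eFun k < 1 := by
  unfold eFun
  rw [div_lt_one (by positivity)]
  have : (0 : ℝ) ≤ (k : ℝ) := Nat.cast_nonneg _
  linarith

lemma e_inj {l : ℕ} {k k' : Fin l} (h : eFun k = eFun k') : k = k' := by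
  unfold eFun at h
  have h3 : (0 : ℝ) < (k : ℝ) + 3 := by positivity
  have h3' : (0 : ℝ) < (k' : ℝ) + 3 := by positivity
  rw [div_eq_div_iff h3.ne' h3'.ne', one_mul, one_mul] at h
  have : (k : ℝ) + 3 = (k' : ℝ) + 3 := h.symm
  have : (k : ℕ) = (k' : ℕ) := by exact_mod_cast (by linarith : (k : ℝ) = (k' : ℝ))
  exact Fin.ext this

lemma one_le_mag {n : ℕ} (lit : Fin n × Bool) : (1 : ℝ) ≤ (mag lit : ℝ) := by
  have : 1 ≤ mag lit := Nat.le_add_left 1 _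
  exact_mod_cast this

lemma eval_ne_of_pol_ne {n : ℕ} (σ : Fin n → Bool) (i : Fin n) {b b' : Bool}
    (h : b ≠ b') : evalLit σ (i, b) ≠ evalLit σ (i, b') := by
  cases b <;> cases b' <;> simp_all [evalLit]

end NAEPlacement

open NAEPlacement in
/-- Completeness of the reduction from NAE-3SAT to Betweenness: a Not-All-Equal
satisfying assignment yields an injective placement of the symbols
`x_i, −x_i, Z_k` on the real line (with `X` at 0) satisfying the betweenness
triples of Equations 1 and 4. -/
theorem NAE_assignment_yields_placement (n l : ℕ)
    (clauses : Fin l → ((Fin n × Bool) × (Fin n × Bool) × (Fin n × Bool)))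
    (hdistinct : ∀ k : Fin l,
      (clauses k).1.1 ≠ (clauses k).2.1.1 ∧
      (clauses k).1.1 ≠ (clauses k).2.2.1 ∧
      (clauses k).2.1.1 ≠ (clauses k).2.2.1)
    (σ : Fin n → Bool)
    (hσ : ∀ k : Fin l,
      NAE (evalLit σ (clauses k).1) (evalLit σ (clauses k).2.1)
        (evalLit σ (clauses k).2.2)) :
    ∃ (p : Fin n × Bool → ℝ) (z : Fin l → ℝ),
      Function.Injective (Sum.elim p z : (Fin n × Bool) ⊕ Fin l → ℝ) ∧
      (∀ lit : Fin n × Bool, p lit ≠ 0) ∧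
      (∀ k : Fin l, z k ≠ 0) ∧
      (∀ lit : Fin n × Bool, 0 < p lit ↔ evalLit σ lit = true) ∧
      (∀ k : Fin l,
        StrictlyBetween (p (clauses k).1) (z k) (p (clauses k).2.1) ∧
        StrictlyBetween (p (clauses k).2.2) 0 (z k)) := by
  classical
  refine ⟨pFun σ, zFun clauses σ, ?_, ?_, ?_, ?_, ?_⟩
  · -- injectivity
    have hMpos : ∀ k : Fin l, (0 : ℝ) < (MnFun clauses σ k : ℝ) + eFun k := by
      intro k
      have := e_pos k
      have : (0 : ℝ) ≤ (MnFun clauses σ k : ℝ) := Nat.cast_nonneg _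
      positivity
    have hp_ne_z : ∀ (lit : Fin n × Bool) (k : Fin l),
        pFun σ lit ≠ zFun clauses σ k := by
      intro lit k
      unfold pFun zFun
      have h1 := one_le_mag lit
      have hM := hMpos k
      have he0 := e_pos k
      have he1 := e_lt_one k
      by_cases hl : evalLit σ lit <;> by_cases hc : evalLit σ (clauses k).2.2 <;>
        simp only [hl, hc, if_true, if_false, ite_true, ite_false, Bool.false_eq_true, reduceIte]
      · intro h; linarith
      · exact nat_ne_nat_add he0 he1
      · intro h
        rw [neg_eq_iff_eq_neg, neg_neg] at h
        exact nat_ne_nat_add he0 he1 h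
      · intro h; linarith
    intro x y h
    match x, y with
    | Sum.inl lit, Sum.inl lit' =>
      simp only [Sum.elim_inl] at h
      obtain ⟨i, b⟩ := lit
      obtain ⟨i', b'⟩ := lit'
      unfold pFun at h
      have hmageq : mag (i, b) = mag (i', b') ∧
          evalLit σ (i, b) = evalLit σ (i', b') := by
        have h1 := one_le_mag (i, b)
        have h2 := one_le_mag (i', b')
        by_cases e1 : evalLit σ (i, b) <;> by_cases e2 : evalLit σ (i', b') <;>
          simp only [e1, e2, if_true, if_false, ite_true, ite_false, Bool.false_eq_true, reduceIte] at h
        · exact ⟨by exact_mod_cast h, by rw [e1, e2]⟩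
        · exfalso; linarith
        · exfalso; linarith
        · refine ⟨by exact_mod_cast (neg_inj.mp h), ?_⟩
          rw [Bool.not_eq_true] at e1 e2
          rw [e1, e2]
      obtain ⟨hm, hev⟩ := hmageq
      have hi : i = i' := by
        unfold mag at hm
        simp only at hm
        exact Fin.ext (by omega)
      subst hi
      have hb : b = b' := by
        by_contra hbb
        exact eval_ne_of_pol_ne σ i hbb hev
      subst hb
      rfl
    | Sum.inl lit, Sum.inr k =>
      simp only [Sum.elim_inl, Sum.elim_inr] at h
      exact absurd h (hp_ne_z lit k)
    | Sum.inr k, Sum.inl lit =>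
      simp only [Sum.elim_inl, Sum.elim_inr] at h
      exact absurd h.symm (hp_ne_z lit k)
    | Sum.inr k, Sum.inr k' =>
      simp only [Sum.elim_inr] at h
      unfold zFun at h
      have hM := hMpos k
      have hM' := hMpos k'
      have hkk : (MnFun clauses σ k : ℝ) + eFun k = (MnFun clauses σ k' : ℝ) + eFun k' := by
        by_cases c1 : evalLit σ (clauses k).2.2 <;>
          by_cases c2 : evalLit σ (clauses k').2.2 <;>
          simp only [c1, c2, if_true, if_false, ite_true, ite_false, Bool.false_eq_true, reduceIte] at h
        · linarith [neg_inj.mp h]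
        · exfalso; linarith
        · exfalso; linarith
        · exact h
      have := nat_add_eq (e_pos k) (e_lt_one k) (e_pos k') (e_lt_one k') hkk
      exact congrArg Sum.inr (e_inj this)
  · -- p nonzero
    intro lit
    have h1 := one_le_mag lit
    unfold pFun
    by_cases hl : evalLit σ lit <;>
      simp only [hl, if_true, if_false, ite_true, ite_false, Bool.false_eq_true, reduceIte] <;> intro h <;> linarith
  · -- z nonzero
    intro k
    have hM : (0 : ℝ) ≤ (MnFun clauses σ k : ℝ) := Nat.cast_nonneg _
    have he0 := e_pos k
    unfold zFun
    by_cases hc : evalLit σ (clauses k).2.2 <;>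
      simp only [hc, if_true, if_false, ite_true, ite_false, Bool.false_eq_true, reduceIte] <;> intro h <;> linarith
  · -- sign of p
    intro lit
    have h1 := one_le_mag lit
    unfold pFun
    by_cases hl : evalLit σ lit <;>
      simp only [hl, if_true, if_false, ite_true, ite_false, Bool.false_eq_true, reduceIte]
    · simp only [iff_true]
      linarith
    · simp only [iff_false]
      intro h; linarith
  · -- betweenness
    intro k
    have hM : (0 : ℝ) ≤ (MnFun clauses σ k : ℝ) := Nat.cast_nonneg _
    have he0 := e_pos k
    have he1 := e_lt_one k
    have h1a := one_le_mag (clauses k).1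
    have h1b := one_le_mag (clauses k).2.1
    have h1c := one_le_mag (clauses k).2.2
    have hnae := hσ k
    unfold NAE at hnae
    by_cases hab : evalLit σ (clauses k).1 = evalLit σ (clauses k).2.1
    · -- same-sign case
      have hbc : evalLit σ (clauses k).2.1 ≠ evalLit σ (clauses k).2.2 :=
        fun h => hnae ⟨hab, h⟩
      have hMval : MnFun clauses σ k = min (mag (clauses k).1) (mag (clauses k).2.1) := by
        unfold MnFun; rw [if_pos hab]
      have hmagne : mag (clauses k).1 ≠ mag (clauses k).2.1 := by
        unfold mag
        intro h
        exact (hdistinct k).1 (Fin.ext (by omega))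
      have hminmax : min (mag (clauses k).1) (mag (clauses k).2.1) + 1 ≤
          max (mag (clauses k).1) (mag (clauses k).2.1) := by omega
      have hminmaxR : min ((mag (clauses k).1 : ℝ)) ((mag (clauses k).2.1 : ℝ)) + 1 ≤
          max ((mag (clauses k).1 : ℝ)) ((mag (clauses k).2.1 : ℝ)) := by
        have := hminmax
        push_cast [Nat.cast_min, Nat.cast_max] at this ⊢
        exact_mod_cast this
      have hsb : StrictlyBetween ((mag (clauses k).1 : ℝ))
          ((MnFun clauses σ k : ℝ) + eFun k) ((mag (clauses k).2.1 : ℝ)) := by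
        rw [hMval, Nat.cast_min]
        exact sb_min hminmaxR he0 he1
      cases hA : evalLit σ (clauses k).1
      · -- A = B = false, C = true
        have hB : evalLit σ (clauses k).2.1 = false := by rw [← hab, hA]
        have hC : evalLit σ (clauses k).2.2 = true := by
          cases hCv : evalLit σ (clauses k).2.2
          · exact absurd (by rw [hB, hCv]) hbc
          · rfl
        unfold pFun zFun
        simp only [hA, hB, hC, if_true, if_false, ite_true, ite_false,
          Bool.false_eq_true]
        constructor
        · exact sb_neg hsb
        · exact Or.inr ⟨by linarith, by linarith⟩
      · -- A = B = true, C = false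
        have hB : evalLit σ (clauses k).2.1 = true := by rw [← hab, hA]
        have hC : evalLit σ (clauses k).2.2 = false := by
          cases hCv : evalLit σ (clauses k).2.2
          · rfl
          · exact absurd (by rw [hB, hCv]) hbc
        unfold pFun zFun
        simp only [hA, hB, hC, if_true, if_false, ite_true, ite_false,
          Bool.false_eq_true]
        constructor
        · exact hsb
        · exact Or.inl ⟨by linarith, by linarith⟩
    · -- opposite-sign case
      have hMval : MnFun clauses σ k = 0 := by
        unfold MnFun; rw [if_neg hab]
      rw [hMval] at hM
      cases hA : evalLit σ (clauses k).1 <;> cases hB : evalLit σ (clauses k).2.1 <;>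
        cases hC : evalLit σ (clauses k).2.2
      all_goals first
        | (exact absurd (hA.trans hB.symm) hab)
        | (unfold pFun zFun
           rw [hMval]
           simp only [hA, hB, hC, if_true, if_false, ite_true, ite_false,
             Bool.false_eq_true, Nat.cast_zero, zero_add]
           constructor
           · first
             | exact Or.inl ⟨by linarith, by linarith⟩
             | exact Or.inr ⟨by linarith, by linarith⟩
           · first
             | exact Or.inl ⟨by linarith, by linarith⟩
             | exact Or.inr ⟨by linarith, by linarith⟩)
end

section
/- Let vp, vp', vb, vc, vd, vq, vq' be seven pairwise distinct real numbers (the positions of the leaves p_i, p_i', b_i, c_i, d_i, q_i, q_i' along an αβ-caterpillar, read from the cherry containing α to the cherry containing β). Then the following six display conditions hold — Split(vp, vp'; vb, vc), Split(vp, vb; vc, vd), Split(vp, vc; vd, vq), Split(vp, vd; vq, vq'), vp < vp', and vq < vq' — if and only if either vp < vp' < vb < vc < vd < vq < vq' or vq < vq' < vd < vc < vb < vp < vp'. That is, exactly two αβ-caterpillars display the quartet set Q_{π_i} = {p p'|b c, p b|c d, p c|d q, p d|q q', α p|p' β, α q|q' β}, namely α p|p' b c d q|q' β and α q|q' d c b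 p|p' β. -/
/-- `Split u v w x` encodes that an αβ-caterpillar (whose leaves are placed at
pairwise distinct real positions) displays the quartet `uv|wx`. -/
def Split (u v w x : ℝ) : Prop :=
  (max u v < min w x) ∨ (max w x < min u v)

/-- Exactly two αβ-caterpillars display the quartet set `Q_{π_i}`. -/
theorem caterpillars_displaying_Q_pi (vp vp' vb vc vd vq vq' : ℝ)
    (hdist : [vp, vp', vb, vc, vd, vq, vq'].Pairwise (· ≠ ·)) :
    (Split vp vp' vb vc ∧ Split vp vb vc vd ∧ Split vp vc vd vq ∧
      Split vp vd vq vq' ∧ vp < vp' ∧ vq < vq') ↔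
    ((vp < vp' ∧ vp' < vb ∧ vb < vc ∧ vc < vd ∧ vd < vq ∧ vq < vq') ∨
     (vq < vq' ∧ vq' < vd ∧ vd < vc ∧ vc < vb ∧ vb < vp ∧ vp < vp')) := by
  simp only [List.pairwise_cons, List.mem_cons, List.mem_singleton,
    List.not_mem_nil] at hdist
  simp only [Split, max_lt_iff, lt_min_iff] at *
  constructor
  · rintro ⟨h1 | h1, h2 | h2, h3 | h3, h4 | h4, h5, h6⟩ <;>
      first
      | exact Or.inl ⟨by linarith [h1.1.1, h1.2.1, h2.1.1, h3.1.1, h4.1.1],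
          by linarith [h1.1.1, h1.1.2, h1.2.1, h1.2.2, h2.1.1, h2.2.1, h3.1.1, h4.1.1],
          by linarith [h1.1.1, h1.1.2, h1.2.1, h1.2.2, h2.1.1, h2.1.2, h2.2.1, h2.2.2, h3.1.1, h4.1.1],
          by linarith [h1.1.1, h1.1.2, h1.2.1, h1.2.2, h2.1.1, h2.1.2, h2.2.1, h2.2.2, h3.1.1, h3.2.1, h4.1.1],
          by linarith [h1.1.1, h1.1.2, h1.2.1, h1.2.2, h2.1.1, h2.1.2, h2.2.1, h2.2.2, h3.1.1, h3.1.2, h3.2.1, h3.2.2, h4.1.1, h4.2.1],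
          by linarith [h1.1.1, h2.1.1, h3.1.1, h4.1.1]⟩
      | exact Or.inr ⟨by linarith [h1.1.1, h2.1.1, h3.1.1, h4.1.1],
          by linarith [h1.1.1, h1.1.2, h1.2.1, h1.2.2, h2.1.1, h2.1.2, h2.2.1, h2.2.2, h3.1.1, h3.1.2, h3.2.1, h3.2.2, h4.1.1, h4.1.2, h4.2.1, h4.2.2],
          by linarith [h1.1.1, h1.1.2, h1.2.1, h1.2.2, h2.1.1, h2.1.2, h2.2.1, h2.2.2, h3.1.1, h3.1.2, h3.2.1, h3.2.2, h4.1.1, h4.1.2, h4.2.1, h4.2.2],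
          by linarith [h1.1.1, h1.1.2, h1.2.1, h1.2.2, h2.1.1, h2.1.2, h2.2.1, h2.2.2, h3.1.1, h3.1.2, h3.2.1, h3.2.2, h4.1.1, h4.1.2, h4.2.1, h4.2.2],
          by linarith [h1.1.1, h1.1.2, h1.2.1, h1.2.2, h2.1.1, h2.1.2, h2.2.1, h2.2.2, h3.1.1, h3.1.2, h3.2.1, h3.2.2, h4.1.1, h4.1.2, h4.2.1, h4.2.2],
          by linarith [h1.1.1, h2.1.1, h3.1.1, h4.1.1]⟩
  · rintro (⟨a,b,c,d,e,f⟩ | ⟨a,b,c,d,e,f⟩)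
    · exact ⟨Or.inl ⟨⟨by linarith, by linarith⟩, by linarith, by linarith⟩,
        Or.inl ⟨⟨by linarith, by linarith⟩, by linarith, by linarith⟩,
        Or.inl ⟨⟨by linarith, by linarith⟩, by linarith, by linarith⟩,
        Or.inl ⟨⟨by linarith, by linarith⟩, by linarith, by linarith⟩,
        by linarith, by linarith⟩
    · exact ⟨Or.inr ⟨⟨by linarith, by linarith⟩, by linarith, by linarith⟩,
        Or.inr ⟨⟨by linarith, by linarith⟩, by linarith, by linarith⟩,
        Or.inr ⟨⟨by linarith, by linarith⟩, by linarith, by linarith⟩,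
        Or.inr ⟨⟨by linarith, by linarith⟩, by linarith, by linarith⟩,
        by linarith, by linarith⟩
end

section
/- Let vp, vp', vx, vy, vq, vq' be six pairwise distinct real numbers (the positions of the leaves p_i, p_i', x_i, y_i, q_i, q_i' along an αβ-caterpillar, read from the cherry containing α to the cherry containing β). Then the following five display conditions hold — Split(vp, vp'; vx, vy), Split(vp, vx; vy, vq), Split(vp, vy; vq, vq'), vp < vp', and vq < vq' — if and only if either vp < vp' < vx < vy < vq < vq' or vq < vq' < vy < vx < vp < vp'. That is, exactly two αβ-caterpillars display the quartet set Q_{τ_i} = {p p'|x y, p x|y q, p y|q q', α p|p' β, α q|q' β}, namely α p|p' x y q|q' β and α q|q' y x p|p' β. -/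
/-- Exactly two αβ-caterpillars display the quartet set `Q_{τ_i}`. -/
theorem caterpillars_displaying_Q_tau (vp vp' vx vy vq vq' : ℝ)
    (hdist : [vp, vp', vx, vy, vq, vq'].Pairwise (· ≠ ·)) :
    (Split vp vp' vx vy ∧ Split vp vx vy vq ∧ Split vp vy vq vq' ∧
      vp < vp' ∧ vq < vq') ↔
    ((vp < vp' ∧ vp' < vx ∧ vx < vy ∧ vy < vq ∧ vq < vq') ∨
     (vq < vq' ∧ vq' < vy ∧ vy < vx ∧ vx < vp ∧ vp < vp')) := by
  simp only [List.pairwise_cons, List.mem_cons, List.not_mem_nil, or_false,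
    List.mem_singleton] at hdist
  simp only [Split, max_lt_iff, lt_min_iff] at *
  constructor
  · rintro ⟨h1 | h1, h2 | h2, h3 | h3, h4, h5⟩ <;>
      [left; left; left; left; right; right; right; right] <;>
      constructor <;> try constructor
    all_goals try constructor
    all_goals try constructor
    all_goals try linarith [h1.1, h1.2, h2.1, h2.2, h3.1, h3.2]
  · rintro (⟨a, b, c, d, e⟩ | ⟨a, b, c, d, e⟩) <;>
      refine ⟨?_, ?_, ?_, by linarith, by linarith⟩ <;>
      [left; left; left; right; right; right] <;>
      exact ⟨⟨by linarith, by linarith⟩, by linarith, by linarith⟩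
end

section
/- Let xi, xi', mi, mi', a, a' be real numbers (the positions of the symbols x_i, −x_i, M_i, −M_i, x_{i−1}, −x_{i−1}, with the symbol X at 0) satisfying the betweenness constraints of Equations 1–3 of the paper: 0 lies strictly between xi' and xi; 0 lies strictly between mi' and mi; a lies strictly between mi' and mi; a' lies strictly between mi' and mi; mi lies strictly between xi' and xi; mi' lies strictly between xi' and xi; 0 lies strictly between xi and mi'; and 0 lies strictly between xi' and mi. Then: (0 < xi ↔ 0 < mi), (0 < xi' ↔ 0 < mi'), min xi' xi < min mi' mi, and max mi' mi < max xi' xi. In particular, xi and mi are on the same side of 0, and the open interval spanned by mi', mi (which contains 0, a, and a') is strictly nested inside the open interval spanned by xi', xi. -/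
/-- Consequences of the betweenness constraints of Equations 1–3 of the paper:
`x_i` and `M_i` lie on the same side of `X` (at 0), and the open interval
spanned by `−M_i, M_i` is strictly nested inside the one spanned by
`−x_i, x_i`. -/
theorem eq123_nesting (xi xi' mi mi' a a' : ℝ)
    (h1 : StrictlyBetween xi' 0 xi)
    (h2 : StrictlyBetween mi' 0 mi)
    (h3 : StrictlyBetween mi' a mi)
    (h4 : StrictlyBetween mi' a' mi)
    (h5 : StrictlyBetween xi' mi xi)
    (h6 : StrictlyBetween xi' mi' xi)
    (h7 : StrictlyBetween xi 0 mi')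
    (h8 : StrictlyBetween xi' 0 mi) :
    (0 < xi ↔ 0 < mi) ∧ (0 < xi' ↔ 0 < mi') ∧
      min xi' xi < min mi' mi ∧ max mi' mi < max xi' xi := by
  unfold StrictlyBetween at *
  rcases h1 with ⟨ha, hb⟩ | ⟨ha, hb⟩
  · -- xi' < 0 < xi
    have hm' : mi' < 0 := by rcases h7 with ⟨p, q⟩ | ⟨p, q⟩ <;> linarith
    have hm : 0 < mi := by rcases h8 with ⟨p, q⟩ | ⟨p, q⟩ <;> linarith
    have h5' : mi < xi := by rcases h5 with ⟨p, q⟩ | ⟨p, q⟩ <;> linarith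
    have h6' : xi' < mi' := by rcases h6 with ⟨p, q⟩ | ⟨p, q⟩ <;> linarith
    refine ⟨⟨fun _ => hm, fun _ => hb⟩, ⟨fun h => absurd h (not_lt.2 ha.le),
      fun h => absurd h (not_lt.2 hm'.le)⟩, ?_, ?_⟩
    · rw [min_eq_left (by linarith : xi' ≤ xi), min_eq_left (by linarith : mi' ≤ mi)]
      exact h6'
    · rw [max_eq_right (by linarith : mi' ≤ mi), max_eq_right (by linarith : xi' ≤ xi)]
      exact h5'
  · -- xi < 0 < xi'
    have hm' : 0 < mi' := by rcases h7 with ⟨p, q⟩ | ⟨p, q⟩ <;> linarith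
    have hm : mi < 0 := by rcases h8 with ⟨p, q⟩ | ⟨p, q⟩ <;> linarith
    have h5' : xi < mi := by rcases h5 with ⟨p, q⟩ | ⟨p, q⟩ <;> linarith
    have h6' : mi' < xi' := by rcases h6 with ⟨p, q⟩ | ⟨p, q⟩ <;> linarith
    refine ⟨⟨fun h => absurd h (not_lt.2 ha.le), fun h => absurd h (not_lt.2 hm.le)⟩,
      ⟨fun _ => hm', fun _ => hb⟩, ?_, ?_⟩
    · rw [min_eq_right (by linarith : xi ≤ xi'), min_eq_right (by linarith : mi ≤ mi')]
      exact h5'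
    · rw [max_eq_left (by linarith : mi ≤ mi'), max_eq_left (by linarith : xi ≤ xi')]
      exact h6'
end
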